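/- For n ≥ 3, the diameter of the commuting graph of ℝ^{n×n} is at least 4: there exist non-scalar matrices A and B such that no path of length at most 3 in the commuting graph connects them. -/
import Mathlib

open Matrix Finset

namespace Stmt6


variable {n : ℕ}

/-- The nilpotent Jordan block. -/
def Jm (n : ℕ) : Matrix (Fin n) (Fin n) ℝ :=
  Matrix.of fun i j => if (i : ℕ) + 1 = (j : ℕ) then 1 else 0

/-- Toeplitz coefficients of a matrix, read off the first row. -/
def cfun (C : Matrix (Fin n) (Fin n) ℝ) (t : ℕ) : ℝ :=
  if h : t < n ∧ 0 < n then C ⟨0, h.2⟩ ⟨t, h.1⟩ else 0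

lemma CJ_apply (C : Matrix (Fin n) (Fin n) ℝ) (i j : Fin n) :
    (C * Jm n) i j = ∑ k : Fin n, (if (k : ℕ) + 1 = (j : ℕ) then C i k else 0) := by
  simp [Matrix.mul_apply, Jm, mul_ite, mul_one, mul_zero, mul_comm]

lemma JC_apply (C : Matrix (Fin n) (Fin n) ℝ) (i j : Fin n) :
    (Jm n * C) i j = ∑ k : Fin n, (if (i : ℕ) + 1 = (k : ℕ) then C k j else 0) := by
  simp [Matrix.mul_apply, Jm, ite_mul, one_mul, zero_mul]

lemma sum_cond (f : Fin n → ℝ) (p : ℕ → Prop) [DecidablePred p] (m : ℕ) (hm : m < n)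
    (hp : ∀ x, p x ↔ x = m) :
    ∑ k : Fin n, (if p (k : ℕ) then f k else 0) = f ⟨m, hm⟩ := by
  rw [Finset.sum_eq_single (⟨m, hm⟩ : Fin n)]
  · rw [if_pos ((hp m).2 rfl)]
  · intro k _ hk
    rw [if_neg]
    intro h
    exact hk (Fin.ext ((hp _).1 h))
  · simp

lemma sum_cond_zero (f : Fin n → ℝ) (p : ℕ → Prop) [DecidablePred p]
    (hp : ∀ x : Fin n, ¬ p (x : ℕ)) :
    ∑ k : Fin n, (if p (k : ℕ) then f k else 0) = 0 :=
  Finset.sum_eq_zero fun k _ => if_neg (hp k)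

lemma shiftC (C : Matrix (Fin n) (Fin n) ℝ) (hC : C * Jm n = Jm n * C)
    (a b : ℕ) (ha : a + 1 < n) (hb : b + 1 < n) :
    C ⟨a, by omega⟩ ⟨b, by omega⟩ = C ⟨a + 1, ha⟩ ⟨b + 1, hb⟩ := by
  have h := congrFun (congrFun hC ⟨a, by omega⟩) ⟨b + 1, hb⟩
  rw [CJ_apply, JC_apply] at h
  rw [sum_cond (fun k => C ⟨a, by omega⟩ k) (fun x => x + 1 = b + 1) b (by omega)
      (fun x => by omega)] at h
  rw [sum_cond (fun k => C k ⟨b + 1, hb⟩) (fun x => a + 1 = x) (a + 1) ha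
      (fun x => by omega)] at h
  exact h

lemma col0 (C : Matrix (Fin n) (Fin n) ℝ) (hC : C * Jm n = Jm n * C)
    (a : ℕ) (ha : a + 1 < n) :
    C ⟨a + 1, ha⟩ ⟨0, by omega⟩ = 0 := by
  have h := congrFun (congrFun hC ⟨a, by omega⟩) ⟨0, by omega⟩
  rw [CJ_apply, JC_apply] at h
  rw [sum_cond_zero (fun k => C ⟨a, by omega⟩ k) (fun x => x + 1 = 0)
      (fun x => by omega)] at h
  rw [sum_cond (fun k => C k ⟨0, by omega⟩) (fun x => a + 1 = x) (a + 1) ha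
      (fun x => by omega)] at h
  exact h.symm



lemma diag_const (C : Matrix (Fin n) (Fin n) ℝ) (hC : C * Jm n = Jm n * C) :
    ∀ (a b : ℕ) (ha : a < n) (hb : b < n), a ≤ b →
      C ⟨a, ha⟩ ⟨b, hb⟩ = C ⟨0, by omega⟩ ⟨b - a, by omega⟩ := by
  intro a
  induction a with
  | zero => intro b ha hb _; simp
  | succ m ih =>
    intro b ha hb hab
    have hb1 : (b - 1) + 1 < n := by omega
    have h := shiftC C hC m (b - 1) ha hb1
    have e1 : (⟨(b - 1) + 1, hb1⟩ : Fin n) = ⟨b, hb⟩ := by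
      simp only [Fin.mk.injEq]; omega
    rw [e1] at h
    rw [← h, ih (b - 1) (by omega) (by omega) (by omega)]
    congr 1
    simp only [Fin.mk.injEq]; omega

lemma lower_zero (C : Matrix (Fin n) (Fin n) ℝ) (hC : C * Jm n = Jm n * C) :
    ∀ (b a : ℕ) (ha : a < n) (hb : b < n), b < a → C ⟨a, ha⟩ ⟨b, hb⟩ = 0 := by
  intro b
  induction b with
  | zero =>
    intro a ha hb h
    have ha1 : (a - 1) + 1 < n := by omega
    have := col0 C hC (a - 1) ha1
    have e1 : (⟨(a - 1) + 1, ha1⟩ : Fin n) = ⟨a, ha⟩ := by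
      simp only [Fin.mk.injEq]; omega
    rwa [e1] at this
  | succ m ih =>
    intro a ha hb h
    have ha1 : (a - 1) + 1 < n := by omega
    have hs := shiftC C hC (a - 1) m ha1 hb
    have e1 : (⟨(a - 1) + 1, ha1⟩ : Fin n) = ⟨a, ha⟩ := by
      simp only [Fin.mk.injEq]; omega
    rw [e1] at hs
    rw [← hs]
    exact ih (a - 1) (by omega) (by omega) (by omega)

lemma cent_upper (C : Matrix (Fin n) (Fin n) ℝ) (hC : C * Jm n = Jm n * C) (i j : Fin n) :
    C i j = if (i : ℕ) ≤ (j : ℕ) then cfun C ((j : ℕ) - (i : ℕ)) else 0 := by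
  by_cases hij : (i : ℕ) ≤ (j : ℕ)
  · rw [if_pos hij]
    have hd : (j : ℕ) - (i : ℕ) < n ∧ 0 < n := ⟨by omega, by omega⟩
    rw [cfun, dif_pos hd]
    have := diag_const C hC i j i.isLt j.isLt hij
    simpa using this
  · rw [if_neg hij]
    have := lower_zero C hC j i i.isLt j.isLt (by omega)
    simpa using this



lemma cfun_large (C : Matrix (Fin n) (Fin n) ℝ) (t : ℕ) (ht : n ≤ t) : cfun C t = 0 := by
  rw [cfun, dif_neg]; omega

lemma transpose_comm (C : Matrix (Fin n) (Fin n) ℝ) (hC : C * (Jm n)ᵀ = (Jm n)ᵀ * C) :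
    Cᵀ * Jm n = Jm n * Cᵀ := by
  have := congrArg Matrix.transpose hC
  rw [Matrix.transpose_mul, Matrix.transpose_mul, Matrix.transpose_transpose] at this
  exact this.symm

lemma exists_pos_coeff (C : Matrix (Fin n) (Fin n) ℝ)
    (hns : ¬ ∃ e : ℝ, C = e • (1 : Matrix (Fin n) (Fin n) ℝ))
    (hrep : ∀ i j : Fin n, C i j = if (i : ℕ) ≤ (j : ℕ) then cfun C ((j : ℕ) - (i : ℕ)) else 0) :
    ∃ k, 1 ≤ k ∧ cfun C k ≠ 0 := by
  by_contra hcon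
  push_neg at hcon
  apply hns
  refine ⟨cfun C 0, ?_⟩
  ext i j
  rw [hrep i j, Matrix.smul_apply, Matrix.one_apply]
  rcases lt_trichotomy (i : ℕ) (j : ℕ) with h | h | h
  · rw [if_pos (by omega), if_neg (by exact fun he => by simp [he] at h),
      hcon _ (by omega)]
    simp
  · have : i = j := Fin.ext h
    subst this
    simp
  · rw [if_neg (by omega), if_neg (by exact fun he => by simp [he] at h)]
    simp

/-- Core lemma: commuting strictly-upper and strictly-lower Toeplitz matrices. -/
lemma key (c d : ℕ → ℝ) (hcn : ∀ t, n ≤ t → c t = 0)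
    (N M : Matrix (Fin n) (Fin n) ℝ)
    (hN : ∀ i j : Fin n, N i j = if (i : ℕ) < (j : ℕ) then c ((j : ℕ) - (i : ℕ)) else 0)
    (hM : ∀ i j : Fin n, M i j = if (j : ℕ) < (i : ℕ) then d ((i : ℕ) - (j : ℕ)) else 0)
    (hcom : N * M = M * N)
    (l : ℕ) (hl1 : 1 ≤ l) (hdl : d l ≠ 0)
    (hmin : ∀ j, 1 ≤ j → j < l → d j = 0)
    (h0n : 0 < n) :
    ∀ t, l ≤ t → c t = 0 := by
  suffices H : ∀ m t, l ≤ t → n ≤ t + m → c t = 0 by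
    intro t ht; exact H n t ht (by omega)
  intro m
  induction m with
  | zero => intro t ht h; exact hcn t (by omega)
  | succ m ih =>
    intro t ht h
    by_cases htn : n ≤ t
    · exact hcn t htn
    push_neg at htn
    have hIH : ∀ s, t < s → c s = 0 := by
      intro s hs
      exact ih s (by omega) (by omega)
    set b : ℕ := t - l with hb
    have hbn : b < n := by omega
    have heq := congrFun (congrFun hcom ⟨0, h0n⟩) ⟨b, hbn⟩
    rw [Matrix.mul_apply, Matrix.mul_apply] at heq
    have hR : ∑ k : Fin n, M ⟨0, h0n⟩ k * N k ⟨b, hbn⟩ = 0 := by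
      refine Finset.sum_eq_zero fun k _ => ?_
      rw [hM, if_neg (by simp), zero_mul]
    have hL : ∑ k : Fin n, N ⟨0, h0n⟩ k * M k ⟨b, hbn⟩ = c t * d l := by
      rw [Finset.sum_eq_single (⟨t, htn⟩ : Fin n)]
      · rw [hN, hM, if_pos (by simp; omega), if_pos (by simp; omega)]
        have e1 : ((⟨t, htn⟩ : Fin n) : ℕ) - ((⟨0, h0n⟩ : Fin n) : ℕ) = t := by simp
        have e2 : ((⟨t, htn⟩ : Fin n) : ℕ) - ((⟨b, hbn⟩ : Fin n) : ℕ) = l := by simp; omega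
        rw [e1, e2]
      · intro k _ hk
        have hkt : (k : ℕ) ≠ t := fun hh => hk (Fin.ext hh)
        rw [hN, hM]
        by_cases h1 : (0 : ℕ) < (k : ℕ)
        · by_cases h2 : (b : ℕ) < (k : ℕ)
          · rw [if_pos (show ((⟨0, h0n⟩ : Fin n) : ℕ) < (k : ℕ) from by simpa using h1),
              if_pos (show ((⟨b, hbn⟩ : Fin n) : ℕ) < (k : ℕ) from by simpa using h2)]
            rcases lt_or_gt_of_ne hkt with hlt | hgt
            · have : d ((k : ℕ) - ((⟨b, hbn⟩ : Fin n) : ℕ)) = 0 := by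
                apply hmin <;> simp <;> omega
              rw [this, mul_zero]
            · have : c ((k : ℕ) - ((⟨0, h0n⟩ : Fin n) : ℕ)) = 0 := by
                simpa using hIH _ (by omega)
              rw [this, zero_mul]
          · rw [if_neg (show ¬ ((⟨b, hbn⟩ : Fin n) : ℕ) < (k : ℕ) from by simpa using h2),
              mul_zero]
        · rw [if_neg (show ¬ ((⟨0, h0n⟩ : Fin n) : ℕ) < (k : ℕ) from by simpa using h1),
              zero_mul]
      · intro hmem; exact absurd (Finset.mem_univ _) hmem
    rw [hL, hR] at heq
    exact (mul_eq_zero.1 heq).resolve_right hdl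



lemma Jm_nonscalar (hn : 3 ≤ n) :
    ¬ ∃ e : ℝ, Jm n = e • (1 : Matrix (Fin n) (Fin n) ℝ) := by
  rintro ⟨e, he⟩
  have h := congrFun (congrFun he ⟨0, by omega⟩) ⟨1, by omega⟩
  rw [Matrix.smul_apply, Matrix.one_apply_ne (by simp [Fin.ext_iff])] at h
  simp [Jm] at h

lemma JmT_nonscalar (hn : 3 ≤ n) :
    ¬ ∃ e : ℝ, (Jm n)ᵀ = e • (1 : Matrix (Fin n) (Fin n) ℝ) := by
  rintro ⟨e, he⟩
  have h := congrFun (congrFun he ⟨1, by omega⟩) ⟨0, by omega⟩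
  rw [Matrix.smul_apply, Matrix.one_apply_ne (by simp [Fin.ext_iff])] at h
  simp [Jm, Matrix.transpose_apply] at h

lemma Jm_not_comm (hn : 3 ≤ n) : ¬ (Jm n * (Jm n)ᵀ = (Jm n)ᵀ * Jm n) := by
  intro h
  have h00 := congrFun (congrFun h ⟨0, by omega⟩) ⟨0, by omega⟩
  rw [Matrix.mul_apply, Matrix.mul_apply] at h00
  have hL : ∑ k : Fin n, Jm n ⟨0, by omega⟩ k * (Jm n)ᵀ k ⟨0, by omega⟩ = 1 := by
    rw [Finset.sum_eq_single (⟨1, by omega⟩ : Fin n)]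
    · simp [Jm]
    · intro k _ hk
      have : (k : ℕ) ≠ 1 := fun hh => hk (Fin.ext hh)
      simp only [Jm, Matrix.transpose_apply, Matrix.of_apply]
      rw [if_neg (show ¬ ((⟨0, by omega⟩ : Fin n) : ℕ) + 1 = (k : ℕ) from by simpa using fun hh => this hh.symm), zero_mul]
    · simp
  have hR : ∑ k : Fin n, (Jm n)ᵀ ⟨0, by omega⟩ k * Jm n k ⟨0, by omega⟩ = 0 := by
    refine Finset.sum_eq_zero fun k _ => ?_
    simp only [Jm, Matrix.transpose_apply, Matrix.of_apply]
    rw [if_neg (by simp), mul_zero]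
  rw [hL, hR] at h00
  exact one_ne_zero h00



lemma sub_scalar_rep (C : Matrix (Fin n) (Fin n) ℝ) (d : ℕ → ℝ)
    (hrep : ∀ i j : Fin n, C i j = if (i : ℕ) ≤ (j : ℕ) then d ((j : ℕ) - (i : ℕ)) else 0) :
    ∀ i j : Fin n, (C - d 0 • 1) i j = if (i : ℕ) < (j : ℕ) then d ((j : ℕ) - (i : ℕ)) else 0 := by
  intro i j
  rw [Matrix.sub_apply, Matrix.smul_apply, Matrix.one_apply, hrep]
  rcases lt_trichotomy (i : ℕ) (j : ℕ) with h | h | h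
  · rw [if_pos (show (i:ℕ) ≤ (j:ℕ) by omega), if_pos h,
      if_neg (show ¬ i = j from fun he => by rw [he] at h; omega)]
    simp
  · have : i = j := Fin.ext h
    subst this
    simp
  · rw [if_neg (show ¬ (i:ℕ) ≤ (j:ℕ) by omega), if_neg (show ¬ (i:ℕ) < (j:ℕ) by omega),
      if_neg (show ¬ i = j from fun he => by rw [he] at h; omega)]
    simp

lemma sub_scalar_rep_low (C : Matrix (Fin n) (Fin n) ℝ) (d : ℕ → ℝ)
    (hrep : ∀ i j : Fin n, C i j = if (j : ℕ) ≤ (i : ℕ) then d ((i : ℕ) - (j : ℕ)) else 0) :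
    ∀ i j : Fin n, (C - d 0 • 1) i j = if (j : ℕ) < (i : ℕ) then d ((i : ℕ) - (j : ℕ)) else 0 := by
  intro i j
  have h := sub_scalar_rep Cᵀ d (fun a b => by simpa using hrep b a) j i
  rw [Matrix.sub_apply, Matrix.smul_apply, Matrix.transpose_apply, Matrix.one_apply] at h
  rw [Matrix.sub_apply, Matrix.smul_apply, Matrix.one_apply]
  rw [show (if j = i then (1:ℝ) else 0) = (if i = j then 1 else 0) from by
    by_cases hh : i = j <;> simp [hh, Ne.symm, eq_comm]] at h
  exact h

lemma comm_sub_scalar (C₁ C₂ : Matrix (Fin n) (Fin n) ℝ) (e₁ e₂ : ℝ)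
    (h : C₁ * C₂ = C₂ * C₁) :
    (C₁ - e₁ • 1) * (C₂ - e₂ • 1) = (C₂ - e₂ • 1) * (C₁ - e₁ • 1) := by
  have h1 : Commute C₁ C₂ := h
  have hA : Commute C₁ (C₂ - e₂ • 1) :=
    h1.sub_right ((Commute.one_right C₁).smul_right e₂)
  have hB : Commute (e₁ • (1 : Matrix (Fin n) (Fin n) ℝ)) (C₂ - e₂ • 1) :=
    ((Commute.one_left C₂).sub_right (Commute.one_left _)).smul_left e₁
  exact (hA.sub_left hB).eq


end Stmt6
theorem stmt6 (n : ℕ) (hn : 3 ≤ n) :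
    ∃ A B : Matrix (Fin n) (Fin n) ℝ,
      (¬ ∃ c : ℝ, A = c • (1 : Matrix (Fin n) (Fin n) ℝ)) ∧
      (¬ ∃ c : ℝ, B = c • (1 : Matrix (Fin n) (Fin n) ℝ)) ∧
      A ≠ B ∧
      ¬ (A * B = B * A) ∧
      (¬ ∃ C : Matrix (Fin n) (Fin n) ℝ,
        (¬ ∃ c : ℝ, C = c • (1 : Matrix (Fin n) (Fin n) ℝ)) ∧
        A * C = C * A ∧ C * B = B * C) ∧
      (¬ ∃ C₁ C₂ : Matrix (Fin n) (Fin n) ℝ,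
        (¬ ∃ c : ℝ, C₁ = c • (1 : Matrix (Fin n) (Fin n) ℝ)) ∧
        (¬ ∃ c : ℝ, C₂ = c • (1 : Matrix (Fin n) (Fin n) ℝ)) ∧
        A * C₁ = C₁ * A ∧ C₁ * C₂ = C₂ * C₁ ∧ C₂ * B = B * C₂) := by
  classical
  refine ⟨Stmt6.Jm n, (Stmt6.Jm n)ᵀ, Stmt6.Jm_nonscalar hn, Stmt6.JmT_nonscalar hn, ?_, Stmt6.Jm_not_comm hn, ?_, ?_⟩
  · -- A ≠ B
    intro h
    exact Stmt6.Jm_not_comm hn (by rw [← h])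
  · -- no path of length 2
    rintro ⟨C, hns, hAC, hCB⟩
    have rep₁ := Stmt6.cent_upper C hAC.symm
    have hCT := Stmt6.transpose_comm C hCB
    have rep₂ := Stmt6.cent_upper Cᵀ hCT
    apply hns
    refine ⟨Stmt6.cfun C 0, ?_⟩
    ext i j
    rw [Matrix.smul_apply, Matrix.one_apply]
    rcases lt_trichotomy (i : ℕ) (j : ℕ) with h | h | h
    · have := rep₂ j i
      rw [Matrix.transpose_apply] at this
      rw [this, if_neg (show ¬ (j:ℕ) ≤ (i:ℕ) by omega),
        if_neg (show ¬ i = j from fun he => by rw [he] at h; omega)]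
      simp
    · have : i = j := Fin.ext h
      subst this
      rw [rep₁ i i, if_pos le_rfl]
      simp
    · rw [rep₁ i j, if_neg (show ¬ (i:ℕ) ≤ (j:ℕ) by omega),
        if_neg (show ¬ i = j from fun he => by rw [he] at h; omega)]
      simp
  · -- no path of length 3
    rintro ⟨C₁, C₂, hns₁, hns₂, hAC₁, hC₁C₂, hC₂B⟩
    have h0n : 0 < n := by omega
    -- upper Toeplitz structure of C₁
    have rep₁ := Stmt6.cent_upper C₁ hAC₁.symm
    set c : ℕ → ℝ := Stmt6.cfun C₁ with hc
    -- lower Toeplitz structure of C₂ via its transpose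
    have hCT : C₂ᵀ * Stmt6.Jm n = Stmt6.Jm n * C₂ᵀ := Stmt6.transpose_comm C₂ hC₂B
    have rep₂T := Stmt6.cent_upper C₂ᵀ hCT
    set d : ℕ → ℝ := Stmt6.cfun C₂ᵀ with hd
    have rep₂ : ∀ i j : Fin n, C₂ i j = if (j:ℕ) ≤ (i:ℕ) then d ((i:ℕ) - (j:ℕ)) else 0 := by
      intro i j
      have := rep₂T j i
      rwa [Matrix.transpose_apply] at this
    -- nonzero strictly triangular coefficients
    obtain ⟨k₀, hk₀⟩ := Stmt6.exists_pos_coeff C₁ hns₁ rep₁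
    have hnsT : ¬ ∃ e : ℝ, C₂ᵀ = e • (1 : Matrix (Fin n) (Fin n) ℝ) := by
      rintro ⟨e, he⟩
      exact hns₂ ⟨e, by rw [← Matrix.transpose_transpose C₂, he, Matrix.transpose_smul,
        Matrix.transpose_one]⟩
    obtain ⟨l₀, hl₀⟩ := Stmt6.exists_pos_coeff C₂ᵀ hnsT rep₂T
    -- minimal indices
    have hkex : ∃ k, 1 ≤ k ∧ c k ≠ 0 := ⟨k₀, hk₀⟩
    have hlex : ∃ l, 1 ≤ l ∧ d l ≠ 0 := ⟨l₀, hl₀⟩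
    set k := Nat.find hkex with hkdef
    set l := Nat.find hlex with hldef
    obtain ⟨hk1, hck⟩ := Nat.find_spec hkex
    obtain ⟨hl1, hdl⟩ := Nat.find_spec hlex
    have hkmin : ∀ j, 1 ≤ j → j < k → c j = 0 := by
      intro j h1 h2
      by_contra hne
      exact Nat.find_min hkex h2 ⟨h1, hne⟩
    have hlmin : ∀ j, 1 ≤ j → j < l → d j = 0 := by
      intro j h1 h2
      by_contra hne
      exact Nat.find_min hlex h2 ⟨h1, hne⟩
    -- strictly triangular parts
    set N : Matrix (Fin n) (Fin n) ℝ := C₁ - c 0 • 1 with hNdef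
    set M : Matrix (Fin n) (Fin n) ℝ := C₂ - d 0 • 1 with hMdef
    have hN : ∀ i j : Fin n, N i j = if (i:ℕ) < (j:ℕ) then c ((j:ℕ) - (i:ℕ)) else 0 :=
      Stmt6.sub_scalar_rep C₁ c rep₁
    have hM : ∀ i j : Fin n, M i j = if (j:ℕ) < (i:ℕ) then d ((i:ℕ) - (j:ℕ)) else 0 :=
      Stmt6.sub_scalar_rep_low C₂ d rep₂
    have hNM : N * M = M * N := Stmt6.comm_sub_scalar C₁ C₂ (c 0) (d 0) hC₁C₂
    -- first application of key: c vanishes from l on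
    have hcl : ∀ t, l ≤ t → c t = 0 :=
      Stmt6.key c d (fun t ht => Stmt6.cfun_large C₁ t ht) N M hN hM hNM l hl1 hdl hlmin h0n
    -- second application of key (transposed): d vanishes from k on
    have hNT : ∀ i j : Fin n, Mᵀ i j = if (i:ℕ) < (j:ℕ) then d ((j:ℕ) - (i:ℕ)) else 0 := by
      intro i j
      rw [Matrix.transpose_apply, hM j i]
    have hMT : ∀ i j : Fin n, Nᵀ i j = if (j:ℕ) < (i:ℕ) then c ((i:ℕ) - (j:ℕ)) else 0 := by
      intro i j
      rw [Matrix.transpose_apply, hN j i]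
    have hMNT : Mᵀ * Nᵀ = Nᵀ * Mᵀ := by
      have := congrArg Matrix.transpose hNM
      rwa [Matrix.transpose_mul, Matrix.transpose_mul] at this
    have hdk : ∀ t, k ≤ t → d t = 0 :=
      Stmt6.key d c (fun t ht => Stmt6.cfun_large C₂ᵀ t ht) Mᵀ Nᵀ hNT hMT hMNT k hk1 hck hkmin h0n
    have h1 : k < l := by
      by_contra hcon
      exact hck (hcl k (by omega))
    have h2 : l < k := by
      by_contra hcon
      exact hdl (hdk l (by omega))
    omega
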